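/- arXiv:2407.14159 — 2 statements merged into one kernel-verified Lean document; each statement's English description precedes it below -/
import Mathlib

section
/- In a transition system on worker states where the only transitions are (a) adding a function f to the state when an anti-monotonic validity predicate V holds of the current state, and (b) removing one occurrence of a function from the state, the following holds: a function f is addable from some state reachable from the empty state if and only if V holds of the empty multiset. Consequently, reachability of f (existence of a reachable state containing f) from the empty state is decided by evaluating V on the empty multiset. -/
def AntiMono {F : Type*} (P : Multiset F → Prop) : Prop :=
  ∀ σ' σ : Multiset F, σ' ≤ σ → P σ → P σ'

/-- One scheduling step: add any function when `V` holds, or remove one occurrence. -/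
def Step {F : Type*} [DecidableEq F] (V : Multiset F → Prop) (σ τ : Multiset F) : Prop :=
  (V σ ∧ ∃ f : F, τ = f ::ₘ σ) ∨ (∃ f ∈ σ, τ = σ.erase f)

def Reach {F : Type*} [DecidableEq F] (V : Multiset F → Prop) (σ : Multiset F) : Prop :=
  Relation.ReflTransGen (Step V) 0 σ

theorem reachability_decided_by_empty {F : Type*} [DecidableEq F]
    (V : Multiset F → Prop) (hV : AntiMono V) (f : F) :
    ((∃ σ : Multiset F, Reach V σ ∧ V σ) ↔ V 0) ∧
    ((∃ σ : Multiset F, Reach V σ ∧ f ∈ σ) ↔ V 0) := by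
  have key : ∀ σ : Multiset F, Reach V σ → σ ≠ 0 → V 0 := by
    intro σ h
    induction h with
    | refl => intro h; exact absurd rfl h
    | tail hr hstep ih =>
      intro _
      rcases hstep with ⟨hv, _⟩ | ⟨g, hg, rfl⟩
      · exact hV 0 _ (Multiset.zero_le _) hv
      · exact ih (fun h0 => by simp [h0] at hg)
  constructor
  · constructor
    · rintro ⟨σ, hr, hv⟩
      exact hV 0 σ (Multiset.zero_le _) hv
    · intro hv
      exact ⟨0, Relation.ReflTransGen.refl, hv⟩
  · constructor
    · rintro ⟨σ, hr, hf⟩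
      exact key σ hr (fun h0 => by simp [h0] at hf)
    · intro hv
      refine ⟨{f}, Relation.ReflTransGen.single ?_, by simp⟩
      exact Or.inl ⟨hv, f, rfl⟩
end

section
/- If every scheduling step in a trace is governed by anti-monotonic validity predicates, then for any valid trace from configuration C to C' over a set of workers, the projection of the trace onto a single worker w (keeping only allocations and deallocations at w, in order) is itself a valid trace from C restricted to w to C' restricted to w, provided each allocation's validity predicate at w depends only on the state of w. -/
/-- Transition labels: allocate or deallocate a function at a worker. -/
inductive Lab (F W : Type*)
  | alloc : F → W → Lab F W
  | deal : F → W → Lab F W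

/-- Worker of a label. -/
def Lab.worker {F W : Type*} : Lab F W → W
  | .alloc _ w => w
  | .deal _ w => w

/-- Valid trace of the multi-worker system: allocations at `w` require the
per-function, per-worker validity predicate on the state of `w`. -/
inductive VT {F W : Type*} [DecidableEq F] [DecidableEq W]
    (V : F → W → Multiset F → Prop) :
    (W → Multiset F) → List (Lab F W) → (W → Multiset F) → Prop
  | nil (C : W → Multiset F) : VT V C [] C
  | alloc {C C' ls} (f : F) (w : W) :
      V f w (C w) → VT V (Function.update C w (f ::ₘ C w)) ls C' →
      VT V C (Lab.alloc f w :: ls) C'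
  | deal {C C' ls} (f : F) (w : W) :
      f ∈ C w → VT V (Function.update C w ((C w).erase f)) ls C' →
      VT V C (Lab.deal f w :: ls) C'

/-- Valid trace of the single-worker system at worker `w`. -/
inductive VT1 {F W : Type*} [DecidableEq F]
    (V : F → W → Multiset F → Prop) (w : W) :
    Multiset F → List (Lab F W) → Multiset F → Prop
  | nil (σ : Multiset F) : VT1 V w σ [] σ
  | alloc {σ σ' ls} (f : F) :
      V f w σ → VT1 V w (f ::ₘ σ) ls σ' → VT1 V w σ (Lab.alloc f w :: ls) σ'
  | deal {σ σ' ls} (f : F) :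
      f ∈ σ → VT1 V w (σ.erase f) ls σ' → VT1 V w σ (Lab.deal f w :: ls) σ'

theorem trace_projection {F W : Type*} [DecidableEq F] [DecidableEq W]
    (V : F → W → Multiset F → Prop)
    (C C' : W → Multiset F) (ls : List (Lab F W)) (w : W)
    (h : VT V C ls C') :
    VT1 V w (C w) (ls.filter (fun l => decide (l.worker = w))) (C' w) := by
  induction h with
  | nil C => exact .nil _
  | alloc f w' hv _ ih =>
    by_cases hw : w' = w
    · subst hw
      rw [Function.update_self] at ih
      simpa [List.filter_cons, Lab.worker] using VT1.alloc f hv ih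
    · rw [Function.update_of_ne (Ne.symm hw)] at ih
      simpa [List.filter_cons, Lab.worker, hw] using ih
  | deal f w' hm _ ih =>
    by_cases hw : w' = w
    · subst hw
      rw [Function.update_self] at ih
      simpa [List.filter_cons, Lab.worker] using VT1.deal f hm ih
    · rw [Function.update_of_ne (Ne.symm hw)] at ih
      simpa [List.filter_cons, Lab.worker, hw] using ih
end
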